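/- arXiv:1109.4067 — 3 statements merged into one kernel-verified Lean document; each statement's English description precedes it below -/
import Mathlib

section
/- Let L be a finite distributive lattice, K a field, and I_L ⊆ K[L] the ideal generated by the basic binomials ab − (a∧b)(a∨b). Then I_L is a prime ideal. -/
/-!
Embed `L` into a lattice of finite sets by Birkhoff, `β : L → Finset ι`, and send the
variable `a` to the monomial `t * ∏_{p ∈ β a} x_p`. This monomial map kills every basic
binomial, and its kernel is prime because the target is a domain. Conversely, modulo `I_L`
every monomial straightens to one supported on a chain, since replacing incomparable `a, b`
by `a ⊓ b, a ⊔ b` strictly increases `∑ #(β a)²`; and distinct chain monomials have distinct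
images, because the image of a chain monomial determines its largest element. Hence the
kernel is exactly `I_L`.
-/

open MvPolynomial Finset

theorem Multiset.coe_toFinset {α : Type*} [DecidableEq α] (m : Multiset α) :
    (m.toFinset : Set α) = {a | a ∈ m} :=
  Set.ext fun _ => Multiset.mem_toFinset

theorem Multiset.exists_forall_le_of_isChain {α : Type*} [Preorder α] {m : Multiset α}
    (hm : IsChain (· ≤ ·) {a | a ∈ m}) (h0 : m ≠ 0) : ∃ t ∈ m, ∀ a ∈ m, a ≤ t := by
  classical
  obtain ⟨t, ht, htmax⟩ := m.toFinset.exists_maximal (Multiset.toFinset_nonempty.2 h0)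
  rw [Multiset.mem_toFinset] at ht
  exact ⟨t, ht, fun a ha => (hm.total ha ht).elim id (htmax (Multiset.mem_toFinset.2 ha))⟩

theorem Finset.sq_card_add_sq_card_lt_of_not_subset {ι : Type*} [DecidableEq ι] {s t : Finset ι}
    (hst : ¬ s ⊆ t) (hts : ¬ t ⊆ s) : #s ^ 2 + #t ^ 2 < #(s ∩ t) ^ 2 + #(s ∪ t) ^ 2 := by
  have hs : #(s ∩ t) < #s :=
    card_lt_card ⟨inter_subset_left, fun h => hst (h.trans inter_subset_right)⟩
  have ht : #(s ∩ t) < #t :=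
    card_lt_card ⟨inter_subset_right, fun h => hts (h.trans inter_subset_left)⟩
  have := card_inter_add_card_union s t
  nlinarith

namespace MvPolynomial

variable {σ τ K : Type*}

section CommSemiring

variable [CommSemiring K]

noncomputable def monomialMap (E : (σ →₀ ℕ) →+ (τ →₀ ℕ)) :
    MvPolynomial σ K →ₐ[K] MvPolynomial τ K :=
  AddMonoidAlgebra.mapDomainAlgHom K K E

theorem monomialMap_monomial (E : (σ →₀ ℕ) →+ (τ →₀ ℕ)) (d : σ →₀ ℕ) (c : K) :
    monomialMap E (monomial d c) = monomial (E d) c :=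
  AddMonoidAlgebra.mapDomain_single

theorem eq_zero_of_monomialMap_eq_zero {E : (σ →₀ ℕ) →+ (τ →₀ ℕ)} {S : Set (σ →₀ ℕ)}
    (hE : Set.InjOn E S) {g : MvPolynomial σ K} (hg : (g.support : Set (σ →₀ ℕ)) ⊆ S)
    (h : monomialMap E g = 0) : g = 0 :=
  AddMonoidAlgebra.coeff_injective <| Finsupp.mapDomain_injOn S hE hg (by simp) <| by
    simpa only [AddMonoidAlgebra.coeff_zero, Finsupp.mapDomain_zero, monomialMap,
      AddMonoidAlgebra.mapDomainAlgHom_apply, AddMonoidAlgebra.coeff_mapDomain] using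
      congrArg AddMonoidAlgebra.coeff h

theorem monomial_toFinsupp_cons [DecidableEq σ] (a : σ) (m : Multiset σ) (c : K) :
    monomial (Multiset.toFinsupp (a ::ₘ m)) c = X a * monomial (Multiset.toFinsupp m) c := by
  rw [← Multiset.singleton_add, Multiset.toFinsupp_add, Multiset.toFinsupp_singleton, X,
    monomial_mul, one_mul]

end CommSemiring

theorem ker_monomialMap_le [CommRing K] {E : (σ →₀ ℕ) →+ (τ →₀ ℕ)} {I : Ideal (MvPolynomial σ K)}
    {S : Set (σ →₀ ℕ)} (hE : Set.InjOn E S) (hI : I ≤ RingHom.ker (monomialMap E))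
    (hS : ∀ d, ∃ c ∈ S, monomial d (1 : K) - monomial c 1 ∈ I) :
    RingHom.ker (monomialMap E) ≤ I := by
  classical
  intro f hf
  choose c hcS hcI using hS
  set g : MvPolynomial σ K := ∑ d ∈ f.support, monomial (c d) (f.coeff d)
  have hfg : f - g ∈ I := by
    have : f - g = ∑ d ∈ f.support, C (f.coeff d) * (monomial d 1 - monomial (c d) 1) := by
      conv_lhs => rw [f.as_sum]
      simp only [g, ← Finset.sum_sub_distrib, mul_sub, C_mul_monomial, mul_one]
    rw [this]
    exact I.sum_mem fun d _ => I.mul_mem_left _ (hcI d)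
  have hg_support : (g.support : Set (σ →₀ ℕ)) ⊆ S := by
    intro x hx
    obtain ⟨d, -, hd⟩ := Finset.mem_biUnion.1 (support_sum hx)
    rw [Finset.mem_singleton.1 (support_monomial_subset hd)]
    exact hcS d
  have hg : g = 0 := by
    refine eq_zero_of_monomialMap_eq_zero hE hg_support ?_
    rw [← sub_sub_cancel f g, map_sub, RingHom.mem_ker.1 hf, RingHom.mem_ker.1 (hI hfg), sub_zero]
  simpa only [hg, sub_zero] using hfg

end MvPolynomial

section HibiExponent

variable {L ι : Type*} [Lattice L] [DecidableEq ι] (β : LatticeHom L (Finset ι))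

-- `none` is the homogenizing variable `t`, and `some p` is `x_p`.
noncomputable def hibiExponent (a : L) : Option ι →₀ ℕ :=
  Finsupp.single none 1 + ∑ p ∈ β a, Finsupp.single (some p) 1

@[simp]
theorem hibiExponent_none (a : L) : hibiExponent β a none = 1 := by
  simp [hibiExponent]

theorem hibiExponent_some (a : L) (p : ι) :
    hibiExponent β a (some p) = if p ∈ β a then 1 else 0 := by
  simp [hibiExponent, Finsupp.single_apply]

theorem hibiExponent_inf_add_sup (a b : L) :
    hibiExponent β (a ⊓ b) + hibiExponent β (a ⊔ b) = hibiExponent β a + hibiExponent β b := by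
  ext (_ | p)
  · simp
  · simp only [Finsupp.add_apply, hibiExponent_some, map_inf, map_sup, Finset.inf_eq_inter,
      Finset.sup_eq_union, Finset.mem_inter, Finset.mem_union]
    split_ifs <;> simp_all

theorem sum_hibiExponent_none (m : Multiset L) :
    (m.map (hibiExponent β)).sum none = Multiset.card m := by
  induction m using Multiset.induction_on with
  | empty => simp
  | cons a m ih => simp [ih, add_comm]

theorem sum_hibiExponent_some_ne_zero_iff (m : Multiset L) (p : ι) :
    (m.map (hibiExponent β)).sum (some p) ≠ 0 ↔ ∃ a ∈ m, p ∈ β a := by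
  induction m using Multiset.induction_on with
  | empty => simp
  | cons a m ih => by_cases hp : p ∈ β a <;> simp [hp, ih, hibiExponent_some]

theorem mem_iff_sum_hibiExponent_ne_zero {m : Multiset L} {t : L} (ht : t ∈ m)
    (hmax : ∀ a ∈ m, a ≤ t) (p : ι) :
    p ∈ β t ↔ (m.map (hibiExponent β)).sum (some p) ≠ 0 := by
  rw [sum_hibiExponent_some_ne_zero_iff]
  exact ⟨fun hp => ⟨t, ht, hp⟩, fun ⟨a, ha, hp⟩ => OrderHomClass.mono β (hmax a ha) hp⟩

theorem eq_of_sum_hibiExponent_eq (hβ : Function.Injective β) {m n : Multiset L}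
    (hm : IsChain (· ≤ ·) {a | a ∈ m}) (hn : IsChain (· ≤ ·) {a | a ∈ n})
    (h : (m.map (hibiExponent β)).sum = (n.map (hibiExponent β)).sum) : m = n := by
  induction m using Multiset.strongInductionOn generalizing n with
  | ih m ih =>
  have hcard : Multiset.card m = Multiset.card n := by
    simpa [sum_hibiExponent_none] using DFunLike.congr_fun h none
  rcases eq_or_ne m 0 with rfl | hm0
  · exact (Multiset.card_eq_zero.1 hcard.symm).symm
  have hn0 : n ≠ 0 := Multiset.card_pos.1 (hcard ▸ Multiset.card_pos.2 hm0)
  obtain ⟨t, htm, htmax⟩ := m.exists_forall_le_of_isChain hm hm0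
  obtain ⟨t', htn, htmax'⟩ := n.exists_forall_le_of_isChain hn hn0
  obtain rfl : t = t' := hβ <| Finset.ext fun p => by
    rw [mem_iff_sum_hibiExponent_ne_zero β htm htmax, h,
      ← mem_iff_sum_hibiExponent_ne_zero β htn htmax']
  obtain ⟨m', rfl⟩ := Multiset.exists_cons_of_mem htm
  obtain ⟨n', rfl⟩ := Multiset.exists_cons_of_mem htn
  simp only [Multiset.map_cons, Multiset.sum_cons, add_right_inj] at h
  rw [ih m' (Multiset.lt_cons_self _ _) (hm.mono fun a ha => Multiset.mem_cons_of_mem ha)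
    (hn.mono fun a ha => Multiset.mem_cons_of_mem ha) h]

noncomputable def hibiExponentHom : (L →₀ ℕ) →+ (Option ι →₀ ℕ) :=
  (Finsupp.linearCombination ℕ (hibiExponent β)).toAddMonoidHom

theorem hibiExponentHom_single (a : L) :
    hibiExponentHom β (Finsupp.single a 1) = hibiExponent β a := by
  simp [hibiExponentHom]

theorem hibiExponentHom_toFinsupp [DecidableEq L] (m : Multiset L) :
    hibiExponentHom β (Multiset.toFinsupp m) = (m.map (hibiExponent β)).sum := by
  induction m using Multiset.induction_on with
  | empty => simp
  | cons a m ih =>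
    rw [← Multiset.singleton_add, Multiset.toFinsupp_add, map_add, ih,
      Multiset.toFinsupp_singleton, hibiExponentHom_single, Multiset.map_add, Multiset.sum_add,
      Multiset.map_singleton, Multiset.sum_singleton]

theorem hibiExponentHom_injOn (hβ : Function.Injective β) :
    Set.InjOn (hibiExponentHom β) {d | IsChain (· ≤ ·) (d.support : Set L)} := by
  classical
  intro d hd d' hd' h
  obtain ⟨m, rfl⟩ := Multiset.toFinsupp.surjective d
  obtain ⟨n, rfl⟩ := Multiset.toFinsupp.surjective d'
  simp only [Set.mem_ofPred_eq, Multiset.toFinsupp_support, Multiset.coe_toFinset] at hd hd'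
  rw [hibiExponentHom_toFinsupp, hibiExponentHom_toFinsupp] at h
  rw [eq_of_sum_hibiExponent_eq β hβ hd hd' h]

end HibiExponent

noncomputable def hibiIdeal (K L : Type*) [CommRing K] [Lattice L] : Ideal (MvPolynomial L K) :=
  Ideal.span {f | ∃ a b : L, f = X a * X b - X (a ⊓ b) * X (a ⊔ b)}

theorem hibiIdeal_le_ker {K L ι : Type*} [CommRing K] [Lattice L] [DecidableEq ι]
    (β : LatticeHom L (Finset ι)) :
    hibiIdeal K L ≤ RingHom.ker (monomialMap (hibiExponentHom β)) := by
  rw [hibiIdeal, Ideal.span_le]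
  rintro _ ⟨a, b, rfl⟩
  simp only [SetLike.mem_coe, RingHom.mem_ker, X, monomial_mul, mul_one, map_sub,
    monomialMap_monomial, map_add, hibiExponentHom_single, hibiExponent_inf_add_sup, sub_self]

theorem monomial_cons_cons_sub_mem_hibiIdeal {K L : Type*} [CommRing K] [Lattice L]
    [DecidableEq L] (a b : L) (s : Multiset L) :
    monomial (Multiset.toFinsupp (a ::ₘ b ::ₘ s)) (1 : K) -
      monomial (Multiset.toFinsupp (a ⊓ b ::ₘ a ⊔ b ::ₘ s)) 1 ∈ hibiIdeal K L := by
  have : monomial (Multiset.toFinsupp (a ::ₘ b ::ₘ s)) (1 : K) -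
      monomial (Multiset.toFinsupp (a ⊓ b ::ₘ a ⊔ b ::ₘ s)) 1 =
      (X a * X b - X (a ⊓ b) * X (a ⊔ b)) * monomial (Multiset.toFinsupp s) 1 := by
    simp only [monomial_toFinsupp_cons]
    ring
  rw [this]
  exact Ideal.mul_mem_right _ _ (Ideal.subset_span ⟨a, b, rfl⟩)

section Straightening

variable {L ι : Type*} [Lattice L] [DecidableEq ι] [Fintype ι] (β : LatticeHom L (Finset ι))

def hibiDefect (m : Multiset L) : ℕ :=
  (m.map fun a => Fintype.card ι ^ 2 - #(β a) ^ 2).sum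

theorem hibiDefect_inf_sup_lt (hβ : Function.Injective β) {a b : L} (hab : ¬ a ≤ b)
    (hba : ¬ b ≤ a) (s : Multiset L) :
    hibiDefect β (a ⊓ b ::ₘ a ⊔ b ::ₘ s) < hibiDefect β (a ::ₘ b ::ₘ s) := by
  have hlt : #(β a) ^ 2 + #(β b) ^ 2 < #(β (a ⊓ b)) ^ 2 + #(β (a ⊔ b)) ^ 2 := by
    rw [map_inf, map_sup]
    exact Finset.sq_card_add_sq_card_lt_of_not_subset
      (mt (orderEmbeddingOfInjective β hβ).le_iff_le.1 hab)
      (mt (orderEmbeddingOfInjective β hβ).le_iff_le.1 hba)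
  have hle (x : L) : #(β x) ^ 2 ≤ Fintype.card ι ^ 2 := Nat.pow_le_pow_left (card_le_univ _) 2
  have := hle a; have := hle b; have := hle (a ⊓ b); have := hle (a ⊔ b)
  simp only [hibiDefect, Multiset.map_cons, Multiset.sum_cons]
  omega

end Straightening

theorem exists_isChain_monomial_sub_mem_hibiIdeal {K L : Type*} [CommRing K] [DistribLattice L]
    [Finite L] [DecidableEq L] (m : Multiset L) :
    ∃ n : Multiset L, IsChain (· ≤ ·) {a | a ∈ n} ∧
      monomial (Multiset.toFinsupp m) (1 : K) - monomial (Multiset.toFinsupp n) 1 ∈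
        hibiIdeal K L := by
  obtain ⟨ι, _, _, β, hβ⟩ := exists_birkhoff_representation L
  induction hd : hibiDefect β m using Nat.strong_induction_on generalizing m with
  | _ d ih =>
  by_cases hm : IsChain (· ≤ ·) {a | a ∈ m}
  · exact ⟨m, hm, by simp⟩
  simp only [IsChain, Set.Pairwise, Set.mem_ofPred_eq, not_forall, not_or] at hm
  obtain ⟨a, ha, b, hb, -, hab, hba⟩ := hm
  obtain ⟨m, rfl⟩ := Multiset.exists_cons_of_mem ha
  obtain ⟨s, rfl⟩ := Multiset.exists_cons_of_mem <|
    (Multiset.mem_cons.1 hb).resolve_left fun h => hab (h ▸ le_rfl)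
  obtain ⟨n, hn, hmem⟩ := ih _ (hd ▸ hibiDefect_inf_sup_lt β hβ hab hba s) _ rfl
  refine ⟨n, hn, ?_⟩
  simpa only [sub_add_sub_cancel] using add_mem (monomial_cons_cons_sub_mem_hibiIdeal a b s) hmem

/-- For a finite distributive lattice `L`, the ideal `I_L` of `K[L]` generated
by the basic binomials is prime. -/
theorem hibi_ideal_prime {L : Type*} [DistribLattice L] [Fintype L]
    {K : Type*} [Field K] :
    (Ideal.span {f : MvPolynomial L K |
      ∃ a b : L, f = X a * X b - X (a ⊓ b) * X (a ⊔ b)}).IsPrime := by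
  classical
  obtain ⟨ι, _, _, β, hβ⟩ := exists_birkhoff_representation L
  have hker : RingHom.ker (monomialMap (K := K) (hibiExponentHom β)) = hibiIdeal K L := by
    refine le_antisymm (ker_monomialMap_le (hibiExponentHom_injOn β hβ) (hibiIdeal_le_ker β)
      fun d => ?_) (hibiIdeal_le_ker β)
    obtain ⟨m, rfl⟩ := Multiset.toFinsupp.surjective d
    obtain ⟨n, hn, hmem⟩ := exists_isChain_monomial_sub_mem_hibiIdeal (K := K) m
    exact ⟨Multiset.toFinsupp n, by simpa [Multiset.coe_toFinset] using hn, hmem⟩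
  change (hibiIdeal K L).IsPrime
  rw [← hker]
  exact RingHom.ker_isPrime _
end

section
/- Let L be a finite lattice, K a field, and suppose the ideal I_L ⊆ K[L] generated by the basic binomials is prime. Then L is distributive. -/
open MvPolynomial

section LatticeLemmas

variable {α : Type*} [Lattice α]

private theorem modular_of_cancel
    (cancel : ∀ a b c : α, a ⊓ c = b ⊓ c → a ⊔ c = b ⊔ c → a = b) :
    IsModularLattice α := by
  constructor
  intro x y z hxz
  have hA : x ⊔ y ⊓ z ≤ z := sup_le hxz inf_le_right
  have h1 : (x ⊔ y ⊓ z) ⊓ y = ((x ⊔ y) ⊓ z) ⊓ y := by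
    apply le_antisymm
    · exact le_inf (le_inf (inf_le_left.trans (sup_le le_sup_left
        (inf_le_left.trans le_sup_right))) (inf_le_left.trans hA)) inf_le_right
    · exact le_inf (le_sup_of_le_right
        (le_inf inf_le_right (inf_le_left.trans inf_le_right))) inf_le_right
  have h2 : (x ⊔ y ⊓ z) ⊔ y = ((x ⊔ y) ⊓ z) ⊔ y := by
    apply le_antisymm
    · exact sup_le (sup_le ((le_inf le_sup_left hxz).trans le_sup_left)
        (inf_le_left.trans le_sup_right)) le_sup_right
    · exact sup_le (inf_le_left.trans
        (sup_le (le_sup_of_le_left le_sup_left) le_sup_right)) le_sup_right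
  exact (cancel _ _ y h1 h2).ge

/-- The median meet computation in a modular lattice. -/
private theorem med_inf {α : Type*} [Lattice α] [IsModularLattice α] (x y z : α) :
    ((x ⊓ ((x ⊔ y) ⊓ (y ⊔ z) ⊓ (z ⊔ x))) ⊔ ((x ⊓ y) ⊔ (y ⊓ z) ⊔ (z ⊓ x)))
      ⊓ ((y ⊓ ((x ⊔ y) ⊓ (y ⊔ z) ⊓ (z ⊔ x))) ⊔ ((x ⊓ y) ⊔ (y ⊓ z) ⊔ (z ⊓ x)))
      = (x ⊓ y) ⊔ (y ⊓ z) ⊔ (z ⊓ x) := by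
  set u : α := (x ⊓ y) ⊔ (y ⊓ z) ⊔ (z ⊓ x) with hu
  set v : α := (x ⊔ y) ⊓ (y ⊔ z) ⊓ (z ⊔ x) with hv
  have huv : u ≤ v := by
    refine sup_le (sup_le ?_ ?_) ?_
    · exact le_inf (le_inf (inf_le_left.trans le_sup_left)
        (inf_le_right.trans le_sup_left)) (inf_le_left.trans le_sup_right)
    · exact le_inf (le_inf (inf_le_left.trans le_sup_right)
        (inf_le_left.trans le_sup_left)) (inf_le_right.trans le_sup_left)
    · exact le_inf (le_inf (inf_le_right.trans le_sup_left)
        (inf_le_left.trans le_sup_right)) (inf_le_left.trans le_sup_left)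
  have hy1v : (y ⊓ v) ⊔ u ≤ v := sup_le inf_le_right huv
  calc ((x ⊓ v) ⊔ u) ⊓ ((y ⊓ v) ⊔ u)
      = (u ⊔ (x ⊓ v)) ⊓ ((y ⊓ v) ⊔ u) := by rw [sup_comm]
    _ = u ⊔ ((x ⊓ v) ⊓ ((y ⊓ v) ⊔ u)) := sup_inf_assoc_of_le _ le_sup_right
    _ = u ⊔ (x ⊓ (v ⊓ ((y ⊓ v) ⊔ u))) := by rw [inf_assoc]
    _ = u ⊔ (x ⊓ ((y ⊓ v) ⊔ u)) := by rw [inf_eq_right.mpr hy1v]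
    _ = u ⊔ (x ⊓ ((y ⊓ (z ⊔ x)) ⊔ u)) := by
          rw [show y ⊓ v = y ⊓ (z ⊔ x) from le_antisymm
            (le_inf inf_le_left (inf_le_right.trans inf_le_right))
            (le_inf inf_le_left (le_inf (le_inf (inf_le_left.trans le_sup_right)
              (inf_le_left.trans le_sup_left)) inf_le_right))]
    _ = u ⊔ (x ⊓ ((y ⊓ (z ⊔ x)) ⊔ (z ⊓ x))) := by
          rw [show (y ⊓ (z ⊔ x)) ⊔ u = (y ⊓ (z ⊔ x)) ⊔ (z ⊓ x) from le_antisymm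
            (sup_le le_sup_left (sup_le (sup_le
              (le_sup_of_le_left (le_inf inf_le_right (inf_le_left.trans le_sup_right)))
              (le_sup_of_le_left (le_inf inf_le_left (inf_le_right.trans le_sup_left))))
              le_sup_right))
            (sup_le le_sup_left (le_sup_of_le_right le_sup_right))]
    _ = u ⊔ (x ⊓ (((z ⊔ x) ⊓ y) ⊔ (z ⊓ x))) := by rw [inf_comm y (z ⊔ x)]
    _ = u ⊔ (x ⊓ ((z ⊔ x) ⊓ (y ⊔ (z ⊓ x)))) := by
          rw [inf_sup_assoc_of_le y (inf_le_sup : z ⊓ x ≤ z ⊔ x)]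
    _ = u ⊔ ((x ⊓ (z ⊔ x)) ⊓ (y ⊔ (z ⊓ x))) := by rw [inf_assoc]
    _ = u ⊔ (x ⊓ (y ⊔ (z ⊓ x))) := by rw [inf_eq_left.mpr (le_sup_right : x ≤ z ⊔ x)]
    _ = u ⊔ ((x ⊓ y) ⊔ (z ⊓ x)) := by rw [inf_sup_assoc_of_le y (inf_le_right : z ⊓ x ≤ x)]
    _ = u := sup_eq_left.mpr (sup_le (le_sup_of_le_left le_sup_left) le_sup_right)

/-- Dual median computation. -/
private theorem med_sup {α : Type*} [Lattice α] [IsModularLattice α] (x y z : α) :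
    ((x ⊔ ((x ⊓ y) ⊔ (y ⊓ z) ⊔ (z ⊓ x))) ⊓ ((x ⊔ y) ⊓ (y ⊔ z) ⊓ (z ⊔ x)))
      ⊔ ((y ⊔ ((x ⊓ y) ⊔ (y ⊓ z) ⊔ (z ⊓ x))) ⊓ ((x ⊔ y) ⊓ (y ⊔ z) ⊓ (z ⊔ x)))
      = (x ⊔ y) ⊓ (y ⊔ z) ⊓ (z ⊔ x) :=
  med_inf (α := αᵒᵈ) (OrderDual.toDual x) (OrderDual.toDual y) (OrderDual.toDual z)

private theorem distrib_of_cancel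
    (cancel : ∀ a b c : α, a ⊓ c = b ⊓ c → a ⊔ c = b ⊔ c → a = b) :
    ∀ x y z : α, x ⊓ (y ⊔ z) = (x ⊓ y) ⊔ (x ⊓ z) := by
  have _inst : IsModularLattice α := modular_of_cancel cancel
  intro x y z
  set u : α := (x ⊓ y) ⊔ (y ⊓ z) ⊔ (z ⊓ x) with hu
  set v : α := (x ⊔ y) ⊓ (y ⊔ z) ⊓ (z ⊔ x) with hv
  have huv : u ≤ v := by
    refine sup_le (sup_le ?_ ?_) ?_
    · exact le_inf (le_inf (inf_le_left.trans le_sup_left)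
        (inf_le_right.trans le_sup_left)) (inf_le_left.trans le_sup_right)
    · exact le_inf (le_inf (inf_le_left.trans le_sup_right)
        (inf_le_left.trans le_sup_left)) (inf_le_right.trans le_sup_left)
    · exact le_inf (le_inf (inf_le_right.trans le_sup_left)
        (inf_le_left.trans le_sup_right)) (inf_le_left.trans le_sup_left)
  -- conversion between the two forms of the median elements
  have hform : ∀ w : α, (w ⊔ u) ⊓ v = (w ⊓ v) ⊔ u := by
    intro w
    rw [sup_comm w u, sup_inf_assoc_of_le w huv, sup_comm u (w ⊓ v)]
  -- permutation identities
  have hucyc : (y ⊓ z) ⊔ (z ⊓ x) ⊔ (x ⊓ y) = u := by rw [hu]; ac_rfl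
  have hvcyc : (y ⊔ z) ⊓ (z ⊔ x) ⊓ (x ⊔ y) = v := by rw [hv]; ac_rfl
  have huswap : (x ⊓ z) ⊔ (z ⊓ y) ⊔ (y ⊓ x) = u := by
    rw [hu, inf_comm z y, inf_comm y x, inf_comm z x]; ac_rfl
  have hvswap : (x ⊔ z) ⊓ (z ⊔ y) ⊓ (y ⊔ x) = v := by
    rw [hv, sup_comm z y, sup_comm y x, sup_comm z x]; ac_rfl
  have mxy : ((x ⊓ v) ⊔ u) ⊓ ((y ⊓ v) ⊔ u) = u := med_inf x y z
  have mxz : ((x ⊓ v) ⊔ u) ⊓ ((z ⊓ v) ⊔ u) = u := by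
    have := med_inf x z y
    rwa [huswap, hvswap] at this
  have myz : ((y ⊓ v) ⊔ u) ⊓ ((z ⊓ v) ⊔ u) = u := by
    have := med_inf y z x
    rwa [hucyc, hvcyc] at this
  have sxy : ((x ⊓ v) ⊔ u) ⊔ ((y ⊓ v) ⊔ u) = v := by
    have := med_sup x y z
    rwa [hform, hform] at this
  have sxz : ((x ⊓ v) ⊔ u) ⊔ ((z ⊓ v) ⊔ u) = v := by
    have := med_sup x z y
    rwa [huswap, hvswap, hform, hform] at this
  have syz : ((y ⊓ v) ⊔ u) ⊔ ((z ⊓ v) ⊔ u) = v := by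
    have := med_sup y z x
    rwa [hucyc, hvcyc, hform, hform] at this
  have hxy : (x ⊓ v) ⊔ u = (y ⊓ v) ⊔ u :=
    cancel _ _ ((z ⊓ v) ⊔ u) (mxz.trans myz.symm) (sxz.trans syz.symm)
  have e1 : u = (y ⊓ v) ⊔ u := by
    conv_lhs => rw [← mxy]
    rw [hxy, inf_idem]
  have e2 : v = (y ⊓ v) ⊔ u := by
    conv_lhs => rw [← sxy]
    rw [hxy, sup_idem]
  have huveq : u = v := e1.trans e2.symm
  apply le_antisymm
  · have h1 : x ⊓ (y ⊔ z) ≤ v :=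
      le_inf (le_inf (inf_le_left.trans le_sup_left) inf_le_right)
        (inf_le_left.trans le_sup_right)
    have h2 : x ⊓ (y ⊔ z) ≤ x ⊓ u := le_inf inf_le_left (by rw [huveq]; exact h1)
    have h3 : u = (y ⊓ z) ⊔ ((x ⊓ y) ⊔ (z ⊓ x)) := by rw [hu]; ac_rfl
    have h4 : x ⊓ u = (x ⊓ (y ⊓ z)) ⊔ ((x ⊓ y) ⊔ (z ⊓ x)) := by
      rw [h3, ← inf_sup_assoc_of_le (y ⊓ z)
        (sup_le inf_le_left inf_le_right : (x ⊓ y) ⊔ (z ⊓ x) ≤ x)]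
    refine h2.trans (h4.le.trans ?_)
    refine sup_le (le_sup_of_le_left (le_inf inf_le_left
      (inf_le_right.trans inf_le_left))) (sup_le le_sup_left
      (le_sup_of_le_right (inf_comm z x).le))
  · exact sup_le (inf_le_inf_left x le_sup_left) (inf_le_inf_left x le_sup_right)

end LatticeLemmas

/-- If for a finite lattice `L` the ideal `I_L` generated by the basic
binomials is prime, then `L` is distributive. -/
theorem distributive_of_hibi_ideal_prime {L : Type*} [Lattice L] [Fintype L]
    {K : Type*} [Field K]
    (h : (Ideal.span {f : MvPolynomial L K |
      ∃ a b : L, f = X a * X b - X (a ⊓ b) * X (a ⊔ b)}).IsPrime) :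
    ∀ x y z : L, x ⊓ (y ⊔ z) = (x ⊓ y) ⊔ (x ⊓ z) := by
  classical
  set S : Set (MvPolynomial L K) :=
    {f : MvPolynomial L K | ∃ a b : L, f = X a * X b - X (a ⊓ b) * X (a ⊔ b)} with hS
  -- any "multiplicative on the lattice relations" evaluation kills the span
  have keyeval : ∀ w : L, ∀ f ∈ Ideal.span S,
      eval (fun t : L => if t ≤ w then (1:K) else 0) f = 0 := by
    intro w f hf
    have hker : Ideal.span S ≤ RingHom.ker (eval (fun t : L => if t ≤ w then (1:K) else 0)) := by
      rw [Ideal.span_le]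
      rintro g ⟨s, t, rfl⟩
      have hval : (if s ≤ w then (1:K) else 0) * (if t ≤ w then (1:K) else 0)
          = (if s ⊓ t ≤ w then (1:K) else 0) * (if s ⊔ t ≤ w then (1:K) else 0) := by
        by_cases hs : s ≤ w <;> by_cases ht : t ≤ w
        · rw [if_pos hs, if_pos ht, if_pos (inf_le_left.trans hs), if_pos (sup_le hs ht)]
        · rw [if_neg ht, if_neg (fun hh : s ⊔ t ≤ w => ht (le_sup_right.trans hh)), mul_zero,
            mul_zero]
        · rw [if_neg hs, if_neg (fun hh : s ⊔ t ≤ w => hs (le_sup_left.trans hh)), zero_mul,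
            mul_zero]
        · rw [if_neg hs, if_neg (fun hh : s ⊔ t ≤ w => hs (le_sup_left.trans hh)), zero_mul,
            mul_zero]
      simp only [SetLike.mem_coe, RingHom.mem_ker, map_sub, map_mul, eval_X]
      rw [hval, sub_self]
    exact hker hf
  have oneeval : ∀ f ∈ Ideal.span S, eval (fun _ : L => (1:K)) f = 0 := by
    intro f hf
    have hker : Ideal.span S ≤ RingHom.ker (eval (fun _ : L => (1:K))) := by
      rw [Ideal.span_le]
      rintro g ⟨s, t, rfl⟩
      simp [RingHom.mem_ker]
    exact hker hf
  apply distrib_of_cancel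
  intro a b c hinf hsup
  by_contra hab
  have hmem : (X a - X b) * X c ∈ Ideal.span S := by
    have h1 : (X a * X c - X (a ⊓ c) * X (a ⊔ c) : MvPolynomial L K) ∈ Ideal.span S :=
      Ideal.subset_span ⟨a, c, rfl⟩
    have h2 : (X b * X c - X (b ⊓ c) * X (b ⊔ c) : MvPolynomial L K) ∈ Ideal.span S :=
      Ideal.subset_span ⟨b, c, rfl⟩
    have heq : (X a - X b) * X c = (X a * X c - X (a ⊓ c) * X (a ⊔ c))
        - (X b * X c - X (b ⊓ c) * X (b ⊔ c) : MvPolynomial L K) := by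
      rw [hinf, hsup]; ring
    rw [heq]
    exact Ideal.sub_mem _ h1 h2
  rcases h.mem_or_mem hmem with hfa | hc
  · by_cases hba : b ≤ a
    · have := keyeval b _ hfa
      rw [map_sub, eval_X, eval_X, if_pos (le_refl b),
        if_neg (fun h' : a ≤ b => hab (le_antisymm h' hba))] at this
      simp at this
    · have := keyeval a _ hfa
      rw [map_sub, eval_X, eval_X, if_pos (le_refl a), if_neg hba] at this
      simp at this
  · have := oneeval _ hc
    rw [eval_X] at this
    exact one_ne_zero this
end

section
/- Let L be a finite lattice that contains no sublattice isomorphic to the pentagon N₅, no sublattice isomorphic to the diamond M₃, and no sublattice isomorphic to the Boolean lattice B₃. Then L is a distributive lattice that embeds (as a lattice) into ℕ × ℕ with the componentwise order. -/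
/-!
A failure `x ⊔ y ⊓ z < (x ⊔ y) ⊓ z` of the modular law spans, together with `y`, a pentagon.
In a modular lattice the element `x ⊓ (y ⊔ z) ⊔ y ⊓ z` and its two cyclic rotations pairwise
meet in the lower median and join to the upper median of `x, y, z`; so they form a diamond
unless the two medians coincide, and that forces `x ⊓ (y ⊔ z) ≤ x ⊓ y ⊔ x ⊓ z`.

By Birkhoff's theorem the distributive lattice `L` is the lattice of lower sets of its poset `J`
of join-irreducibles. Three pairwise incomparable elements of `J` would span a copy of `B₃`
(everything strictly below them, plus any subset of the three), so `J` has width at most two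
and is the union of two chains. A chain meets the lower sets of `J` in nested initial
segments, so counting how many elements of each chain a lower set contains is an injective
lattice homomorphism into `ℕ × ℕ`.
-/

open Set Function

def HasPentagon (L : Type*) [Lattice L] : Prop :=
  ∃ a b c d e : L, c < b ∧ d ⊓ c = e ∧ d ⊓ b = e ∧ d ⊔ c = a ∧ d ⊔ b = a

def HasDiamond (L : Type*) [Lattice L] : Prop :=
  ∃ e a b c d : L, b ≠ c ∧ b ≠ d ∧ c ≠ d ∧ b ⊓ c = e ∧ b ⊓ d = e ∧ c ⊓ d = e ∧
    b ⊔ c = a ∧ b ⊔ d = a ∧ c ⊔ d = a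

section Lattice
variable {L : Type*} [Lattice L]

theorem isModularLattice_of_not_hasPentagon (h : ¬ HasPentagon L) : IsModularLattice L := by
  refine ⟨fun {x} y {z} hxz => ?_⟩
  by_contra hge
  have hlt : x ⊔ y ⊓ z < (x ⊔ y) ⊓ z :=
    lt_of_le_not_ge (le_inf (sup_le_sup_left inf_le_left x) (sup_le hxz inf_le_right)) hge
  exact h ⟨x ⊔ y, _, _, y, y ⊓ z, hlt, by order, by order, by order, by order⟩

def upperMedian (x y z : L) : L := (x ⊔ y) ⊓ (y ⊔ z) ⊓ (z ⊔ x)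

def lowerMedian (x y z : L) : L := x ⊓ y ⊔ y ⊓ z ⊔ z ⊓ x

def diamondPoint (x y z : L) : L := x ⊓ (y ⊔ z) ⊔ y ⊓ z

theorem upperMedian_rotate (x y z : L) : upperMedian y z x = upperMedian x y z := by
  unfold upperMedian; order

theorem lowerMedian_rotate (x y z : L) : lowerMedian y z x = lowerMedian x y z := by
  unfold lowerMedian; order

variable [IsModularLattice L]

theorem inf_sup_sup_inf_sup_eq_upperMedian (x y z : L) :
    x ⊓ (y ⊔ z) ⊔ y ⊓ (z ⊔ x) = upperMedian x y z := by
  rw [← sup_inf_assoc_of_le y (inf_le_left.trans le_sup_right : x ⊓ (y ⊔ z) ≤ z ⊔ x),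
    sup_comm, ← sup_inf_assoc_of_le x (le_sup_left : y ≤ y ⊔ z), sup_comm y x]
  rfl

theorem sup_inf_inf_sup_inf_eq_lowerMedian (x y z : L) :
    (x ⊔ y ⊓ z) ⊓ (y ⊔ z ⊓ x) = lowerMedian x y z :=
  inf_sup_sup_inf_sup_eq_upperMedian (L := Lᵒᵈ) x y z

theorem diamondPoint_eq_inf (x y z : L) : diamondPoint x y z = (x ⊔ y ⊓ z) ⊓ (y ⊔ z) := by
  rw [diamondPoint, sup_comm, ← sup_inf_assoc_of_le x inf_le_sup, sup_comm]

theorem diamondPoint_sup_rotate (x y z : L) :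
    diamondPoint x y z ⊔ diamondPoint y z x = upperMedian x y z := by
  rw [← inf_sup_sup_inf_sup_eq_upperMedian, diamondPoint, diamondPoint]
  order

theorem diamondPoint_inf_rotate (x y z : L) :
    diamondPoint x y z ⊓ diamondPoint y z x = lowerMedian x y z := by
  rw [diamondPoint_eq_inf, diamondPoint_eq_inf, inf_inf_inf_comm,
    sup_inf_inf_sup_inf_eq_lowerMedian, inf_eq_left, lowerMedian]
  order

theorem inf_lowerMedian (x y z : L) : x ⊓ lowerMedian x y z = x ⊓ y ⊔ x ⊓ z := by
  have h₁ : x ⊓ (x ⊓ y ⊔ y ⊓ z ⊔ z ⊓ x) = x ⊓ (x ⊓ y ⊔ y ⊓ z) ⊔ z ⊓ x :=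
    (inf_sup_assoc_of_le _ inf_le_right).symm
  have h₂ : x ⊓ (y ⊓ z ⊔ x ⊓ y) = x ⊓ (y ⊓ z) ⊔ x ⊓ y := (inf_sup_assoc_of_le _ inf_le_left).symm
  rw [lowerMedian, h₁, sup_comm (x ⊓ y), h₂]
  order

theorem inf_sup_le_of_not_hasDiamond (h : ¬ HasDiamond L) (x y z : L) :
    x ⊓ (y ⊔ z) ≤ x ⊓ y ⊔ x ⊓ z := by
  by_cases hmed : lowerMedian x y z = upperMedian x y z
  · calc x ⊓ (y ⊔ z) ≤ x ⊓ upperMedian x y z := by unfold upperMedian; order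
      _ = x ⊓ y ⊔ x ⊓ z := by rw [← hmed, inf_lowerMedian]
  have hne {u v : L} (hinf : u ⊓ v = lowerMedian x y z) (hsup : u ⊔ v = upperMedian x y z) :
      u ≠ v := by
    rintro rfl
    exact hmed (by rw [← hinf, ← hsup, inf_idem, sup_idem])
  have hXZ : diamondPoint x y z ⊓ diamondPoint z x y = lowerMedian x y z := by
    rw [inf_comm, diamondPoint_inf_rotate, lowerMedian_rotate, lowerMedian_rotate]
  have hYZ : diamondPoint y z x ⊓ diamondPoint z x y = lowerMedian x y z := by
    rw [diamondPoint_inf_rotate, lowerMedian_rotate]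
  have hXZ' : diamondPoint x y z ⊔ diamondPoint z x y = upperMedian x y z := by
    rw [sup_comm, diamondPoint_sup_rotate, upperMedian_rotate, upperMedian_rotate]
  have hYZ' : diamondPoint y z x ⊔ diamondPoint z x y = upperMedian x y z := by
    rw [diamondPoint_sup_rotate, upperMedian_rotate]
  have hXY := diamondPoint_inf_rotate x y z
  have hXY' := diamondPoint_sup_rotate x y z
  exact absurd ⟨_, _, _, _, _, hne hXY hXY', hne hXZ hXZ', hne hYZ hYZ', hXY, hXZ, hYZ, hXY', hXZ',
    hYZ'⟩ h

end Lattice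

section ChainCover
variable {P : Type*} [PartialOrder P]

def WidthLeTwo (s : Set P) : Prop :=
  ∀ a ∈ s, ∀ b ∈ s, ∀ c ∈ s,
    IncompRel (· ≤ ·) a b → IncompRel (· ≤ ·) b c → IncompRel (· ≤ ·) a c → False

def HasTwoChainCover (s : Set P) : Prop :=
  ∃ C₁ C₂ : Set P, IsChain (· ≤ ·) C₁ ∧ IsChain (· ≤ ·) C₂ ∧ C₁ ∪ C₂ = s

theorem IsChain.exists_isGreatest {C : Set P} (hC : IsChain (· ≤ ·) C) (hfin : C.Finite)
    (hne : C.Nonempty) : ∃ b, IsGreatest C b := by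
  obtain ⟨b, hb⟩ := hfin.exists_maximal hne
  exact ⟨b, hb.1, fun x hx => (hC.total hx hb.1).elim id fun hbx => hb.2 hx hbx⟩

theorem IsChain.exists_incompRel_of_not_isChain_union {C D : Set P} (hC : IsChain (· ≤ ·) C)
    (hD : IsChain (· ≤ ·) D) (h : ¬ IsChain (· ≤ ·) (C ∪ D)) :
    ∃ x ∈ C, ∃ y ∈ D, IncompRel (· ≤ ·) x y := by
  simp only [IsChain, Set.Pairwise, not_forall, exists_prop] at h
  obtain ⟨x, hx, y, hy, hxy, hcomp⟩ := h
  rcases hx with hxC | hxD <;> rcases hy with hyC | hyD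
  · exact absurd (hC hxC hyC hxy) hcomp
  · exact ⟨x, hxC, y, hyD, not_or.1 hcomp⟩
  · exact ⟨y, hyC, x, hxD, (not_or.1 hcomp).symm⟩
  · exact absurd (hD hxD hyD hxy) hcomp

/-- The elements of `C` above `b` are comparable with everything, so they can join `D`, while
`a` caps the part of `C` below `b`. -/
theorem hasTwoChainCover_insert_of_le {C D : Set P} {a b : P} (hC : IsChain (· ≤ ·) C)
    (hD : IsChain (· ≤ ·) D) (hba : b ≤ a)
    (hb : ∀ x ∈ C, ∀ y ∈ C ∪ D, IncompRel (· ≤ ·) x y → x ≤ b) :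
    HasTwoChainCover (insert a (C ∪ D)) := by
  refine ⟨insert a {x ∈ C | x ≤ b}, D ∪ {x ∈ C | ¬ x ≤ b}, ?_, ?_, ?_⟩
  · exact (hC.mono (sep_subset _ _)).insert fun x hx _ => Or.inr (hx.2.trans hba)
  · intro x hx y hy hne
    by_contra hxy
    have hinc : IncompRel (· ≤ ·) x y := not_or.1 hxy
    rcases hx with hxD | ⟨hxC, hxb⟩
    · rcases hy with hyD | ⟨hyC, hyb⟩
      · exact hxy (hD hxD hyD hne)
      · exact hyb (hb y hyC x (Or.inr hxD) hinc.symm)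
    · exact hxb (hb x hxC y (hy.elim Or.inr fun hy => Or.inl hy.1) hinc)
  · ext x
    simp only [mem_union, mem_insert_iff, mem_sep_iff]
    tauto

theorem not_le_of_forall_incompRel_le {C D : Set P} {b b' w : P} (hD : IsChain (· ≤ ·) D)
    (hb : ∀ x ∈ C, ∀ y ∈ C ∪ D, IncompRel (· ≤ ·) x y → x ≤ b) (hb' : b' ∈ D) (hw : w ∈ D ∪ C)
    (hinc : IncompRel (· ≤ ·) b' w) : ¬ b ≤ b' := by
  intro hbb'
  rcases hw with hwD | hwC
  · exact not_or.2 hinc (hD.total hb' hwD)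
  · exact hinc.2 ((hb w hwC b' (Or.inr hb') hinc.symm).trans hbb')

theorem IsChain.exists_greatest_incompRel {C S : Set P} {x y : P} (hC : IsChain (· ≤ ·) C)
    (hfin : C.Finite) (hx : x ∈ C) (hy : y ∈ S) (hxy : IncompRel (· ≤ ·) x y) :
    ∃ b ∈ C, (∃ w ∈ S, IncompRel (· ≤ ·) b w) ∧
      ∀ x ∈ C, ∀ y ∈ S, IncompRel (· ≤ ·) x y → x ≤ b := by
  obtain ⟨b, ⟨hbC, hbS⟩, hb⟩ := (hC.mono (sep_subset C _)).exists_isGreatest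
    (hfin.subset (sep_subset C fun x => ∃ y ∈ S, IncompRel (· ≤ ·) x y)) ⟨x, hx, y, hy, hxy⟩
  exact ⟨b, hbC, hbS, fun x hx y hy hxy => hb ⟨hx, y, hy, hxy⟩⟩

/-- If `C₁ ∪ C₂` is not a chain, the largest elements `b₁ ∈ C₁`, `b₂ ∈ C₂` incomparable to
something are incomparable to each other, so by width the maximal element `a` lies above one of
them. -/
theorem hasTwoChainCover_insert [Finite P] {C₁ C₂ : Set P} {a : P} (h₁ : IsChain (· ≤ ·) C₁)
    (h₂ : IsChain (· ≤ ·) C₂) (ha : ∀ x ∈ C₁ ∪ C₂, a ≤ x → x ≤ a)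
    (hw : WidthLeTwo (insert a (C₁ ∪ C₂))) : HasTwoChainCover (insert a (C₁ ∪ C₂)) := by
  by_cases hchain : IsChain (· ≤ ·) (C₁ ∪ C₂)
  · exact ⟨C₁ ∪ C₂, {a}, hchain, IsChain.singleton, union_singleton⟩
  obtain ⟨x₁, hx₁, y₁, hy₁, hxy₁⟩ := h₁.exists_incompRel_of_not_isChain_union h₂ hchain
  obtain ⟨x₂, hx₂, y₂, hy₂, hxy₂⟩ :=
    h₂.exists_incompRel_of_not_isChain_union h₁ (union_comm C₁ C₂ ▸ hchain)
  obtain ⟨b₁, hb₁C, ⟨w₁, hw₁, hbw₁⟩, hb₁⟩ :=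
    h₁.exists_greatest_incompRel (S := C₁ ∪ C₂) (toFinite _) hx₁ (Or.inr hy₁) hxy₁
  obtain ⟨b₂, hb₂C, ⟨w₂, hw₂, hbw₂⟩, hb₂⟩ :=
    h₂.exists_greatest_incompRel (S := C₂ ∪ C₁) (toFinite _) hx₂ (Or.inr hy₂) hxy₂
  by_cases hb₁a : b₁ ≤ a
  · exact hasTwoChainCover_insert_of_le h₁ h₂ hb₁a hb₁
  by_cases hb₂a : b₂ ≤ a
  · rw [union_comm]
    exact hasTwoChainCover_insert_of_le h₂ h₁ hb₂a hb₂
  have hab₁ : IncompRel (· ≤ ·) a b₁ := ⟨fun h => hb₁a (ha b₁ (Or.inl hb₁C) h), hb₁a⟩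
  have hab₂ : IncompRel (· ≤ ·) a b₂ := ⟨fun h => hb₂a (ha b₂ (Or.inr hb₂C) h), hb₂a⟩
  have hb₁₂ : IncompRel (· ≤ ·) b₁ b₂ := ⟨not_le_of_forall_incompRel_le h₂ hb₁ hb₂C hw₂ hbw₂,
    not_le_of_forall_incompRel_le h₁ hb₂ hb₁C hw₁ hbw₁⟩
  exact (hw a (mem_insert _ _) b₁ (Or.inr (Or.inl hb₁C)) b₂ (Or.inr (Or.inr hb₂C))
    hab₁ hb₁₂ hab₂).elim

theorem hasTwoChainCover_of_widthLeTwo [Finite P] (s : Set P) (hs : WidthLeTwo s) :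
    HasTwoChainCover s := by
  induction s using WellFoundedLT.induction with
  | _ s ih =>
  rcases s.eq_empty_or_nonempty with rfl | hne
  · exact ⟨∅, ∅, IsChain.empty, IsChain.empty, union_empty _⟩
  obtain ⟨a, has, hmax⟩ := s.toFinite.exists_maximal hne
  obtain ⟨C₁, C₂, h₁, h₂, hC⟩ := ih (s \ {a}) (sdiff_singleton_ssubset.2 has)
    fun x hx y hy z hz => hs x hx.1 y hy.1 z hz.1
  have hs' : insert a (C₁ ∪ C₂) = s := by rw [hC, insert_sdiff_singleton, insert_eq_of_mem has]
  rw [← hs'] at hs ⊢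
  exact hasTwoChainCover_insert h₁ h₂ (fun x hx => hmax (hC ▸ hx).1) hs

end ChainCover

section LowerSets
variable {P : Type*} [PartialOrder P]

def antichainLowerSet {ι : Type*} (v : ι → P) (S : Set ι) : LowerSet P where
  carrier := {x | ∃ i, x < v i} ∪ v '' S
  lower' := by
    rintro x y hyx (⟨i, hi⟩ | ⟨i, hi, rfl⟩)
    · exact Or.inl ⟨i, hyx.trans_lt hi⟩
    · rcases hyx.lt_or_eq with h | rfl
      · exact Or.inl ⟨i, h⟩
      · exact Or.inr ⟨i, hi, rfl⟩

theorem eq_of_le_of_incompRel_three {a b c : P} (hab : IncompRel (· ≤ ·) a b)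
    (hbc : IncompRel (· ≤ ·) b c) (hac : IncompRel (· ≤ ·) a c) (i j : Fin 3)
    (hij : ![a, b, c] i ≤ ![a, b, c] j) : i = j := by
  fin_cases i <;> fin_cases j <;> simp_all [IncompRel]

theorem exists_injective_latticeHom_set_lowerSet {ι : Type*} (v : ι → P)
    (hv : ∀ i j, v i ≤ v j → i = j) :
    ∃ g : LatticeHom (Set ι) (LowerSet P), Injective g := by
  have hinj : Injective v := fun i j h => hv i j h.le
  have hmem (i : ι) (S : Set ι) : v i ∈ antichainLowerSet v S ↔ i ∈ S := by
    refine ⟨?_, fun hi => Or.inr ⟨i, hi, rfl⟩⟩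
    rintro (⟨j, hij⟩ | ⟨j, hj, hji⟩)
    · exact absurd (hv i j hij.le ▸ hij) (lt_irrefl _)
    · exact hinj hji ▸ hj
  refine ⟨{ toFun := antichainLowerSet v, map_sup' := fun S T => ?_, map_inf' := fun S T => ?_ },
    fun S T (hST : antichainLowerSet v S = antichainLowerSet v T) =>
      ext fun i => by rw [← hmem, ← hmem, hST]⟩
  · exact SetLike.coe_injective <| (congrArg _ (image_union v S T)).trans
      (union_union_distrib_left _ _ _)
  · exact SetLike.coe_injective <| (congrArg _ (image_inter hinj)).trans
      (union_inter_distrib_left _ _ _)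

theorem IsChain.lowerSet_inter_total {C : Set P} (hC : IsChain (· ≤ ·) C) (s t : LowerSet P) :
    (s : Set P) ∩ C ⊆ t ∩ C ∨ (t : Set P) ∩ C ⊆ s ∩ C := by
  by_contra! h
  obtain ⟨x, ⟨hxs, hxC⟩, hxt⟩ := not_subset.1 h.1
  obtain ⟨y, ⟨hyt, hyC⟩, hys⟩ := not_subset.1 h.2
  rcases hC.total hxC hyC with hxy | hyx
  · exact hxt ⟨t.lower hxy hyt, hxC⟩
  · exact hys ⟨s.lower hyx hxs, hyC⟩

variable [Finite P] {C : Set P}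

noncomputable def IsChain.ncardInterHom (hC : IsChain (· ≤ ·) C) : LatticeHom (LowerSet P) ℕ where
  toFun s := ((s : Set P) ∩ C).ncard
  map_sup' s t := by
    rw [LowerSet.coe_sup, union_inter_distrib_right]
    rcases hC.lowerSet_inter_total s t with h | h
    · rw [union_eq_right.2 h, max_eq_right (ncard_le_ncard h)]
    · rw [union_eq_left.2 h, max_eq_left (ncard_le_ncard h)]
  map_inf' s t := by
    rw [LowerSet.coe_inf, inter_inter_distrib_right]
    rcases hC.lowerSet_inter_total s t with h | h
    · rw [inter_eq_left.2 h, min_eq_left (ncard_le_ncard h)]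
    · rw [inter_eq_right.2 h, min_eq_right (ncard_le_ncard h)]

theorem IsChain.inter_eq_of_ncardInterHom_eq (hC : IsChain (· ≤ ·) C) {s t : LowerSet P}
    (h : hC.ncardInterHom s = hC.ncardInterHom t) : (s : Set P) ∩ C = (t : Set P) ∩ C := by
  rcases hC.lowerSet_inter_total s t with hst | hts
  · exact eq_of_subset_of_ncard_le hst h.ge
  · exact (eq_of_subset_of_ncard_le hts h.le).symm

theorem exists_injective_latticeHom_lowerSet_nat_prod (h : HasTwoChainCover (univ : Set P)) :
    ∃ f : LatticeHom (LowerSet P) (ℕ × ℕ), Injective f := by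
  obtain ⟨C₁, C₂, h₁, h₂, hC⟩ := h
  refine ⟨{ toFun s := (h₁.ncardInterHom s, h₂.ncardInterHom s)
            map_sup' s t := by simp only [map_sup, Prod.mk_sup_mk]
            map_inf' s t := by simp only [map_inf, Prod.mk_inf_mk] }, fun s t hst => ?_⟩
  have h₁st := h₁.inter_eq_of_ncardInterHom_eq (congrArg Prod.fst hst)
  have h₂st := h₂.inter_eq_of_ncardInterHom_eq (congrArg Prod.snd hst)
  apply SetLike.coe_injective
  rw [← inter_univ (s : Set P), ← inter_univ (t : Set P), ← hC, inter_union_distrib_left,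
    inter_union_distrib_left, h₁st, h₂st]

end LowerSets

/-- A finite lattice containing no pentagon `N₅`, no diamond `M₃` and no
Boolean lattice `B₃` as a sublattice is distributive and embeds as a lattice
into `ℕ × ℕ` with the componentwise order. -/
theorem no_pentagon_diamond_boolean_implies_planar {L : Type*} [Lattice L]
    [Finite L]
    (hN : ¬ ∃ a b c d e : L, c < b ∧
      d ⊓ c = e ∧ d ⊓ b = e ∧ d ⊔ c = a ∧ d ⊔ b = a)
    (hM : ¬ ∃ e a b c d : L, b ≠ c ∧ b ≠ d ∧ c ≠ d ∧
      b ⊓ c = e ∧ b ⊓ d = e ∧ c ⊓ d = e ∧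
      b ⊔ c = a ∧ b ⊔ d = a ∧ c ⊔ d = a)
    (hB : ¬ ∃ g : Set (Fin 3) → L, Function.Injective g ∧
      (∀ x y, g (x ⊔ y) = g x ⊔ g y) ∧ (∀ x y, g (x ⊓ y) = g x ⊓ g y)) :
    (∀ x y z : L, x ⊓ (y ⊔ z) = (x ⊓ y) ⊔ (x ⊓ z)) ∧
      ∃ f : L → ℕ × ℕ, Function.Injective f ∧
        (∀ x y, f (x ⊔ y) = f x ⊔ f y) ∧ (∀ x y, f (x ⊓ y) = f x ⊓ f y) := by
  have : IsModularLattice L := isModularLattice_of_not_hasPentagon hN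
  let _ : DistribLattice L := DistribLattice.ofInfSupLe (inf_sup_le_of_not_hasDiamond hM)
  refine ⟨inf_sup_left, ?_⟩
  rcases isEmpty_or_nonempty L with _ | _
  · exact ⟨0, injective_of_subsingleton _, isEmptyElim, isEmptyElim⟩
  classical
  have := Fintype.ofFinite L
  have := Fintype.toOrderBot L
  let φ : L ≃o LowerSet {a : L // SupIrred a} := OrderIso.lowerSetSupIrred
  have hwidth : WidthLeTwo (univ : Set {a : L // SupIrred a}) := by
    rintro a - b - c - hab hbc hac
    obtain ⟨g, hg⟩ :=
      exists_injective_latticeHom_set_lowerSet ![a, b, c] (eq_of_le_of_incompRel_three hab hbc hac)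
    exact hB ⟨φ.symm ∘ g, φ.symm.injective.comp hg,
      fun S T => (congrArg φ.symm (map_sup g S T)).trans (map_sup φ.symm _ _),
      fun S T => (congrArg φ.symm (map_inf g S T)).trans (map_inf φ.symm _ _)⟩
  obtain ⟨f, hf⟩ :=
    exists_injective_latticeHom_lowerSet_nat_prod (hasTwoChainCover_of_widthLeTwo univ hwidth)
  exact ⟨f ∘ φ, hf.comp φ.injective,
    fun x y => (congrArg f (map_sup φ x y)).trans (map_sup f _ _),
    fun x y => (congrArg f (map_inf φ x y)).trans (map_inf f _ _)⟩
end
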